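/- Fix t ∈ [0,T] and suppose that Λ(t,·,·,·): ℝ^ℓ×ℝ^ℓ×P₂(ℝ^ℓ) → ℝ^m and V(t,·,·): ℝ^ℓ×P₂(ℝ^ℓ) → ℝ^ℓ are Lipschitz continuous (Euclidean distance in the vector arguments and the 2-Wasserstein distance W₂ in the measure argument). Then there is a constant C > 0 such that W₂(Ψ(t,ξ), Ψ(t,ξ')) ≤ C·W₂(ξ, ξ') for all ξ, ξ' ∈ P₂(ℝ^ℓ), i.e. the map μ ↦ Ψ(t,μ) = μ ∘ Λ(t,·,V(t,·,μ),μ)^{-1} is Lipschitz with respect to W₂. -/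

import Mathlib

open MeasureTheory ProbabilityTheory Filter Set Matrix
open scoped ENNReal NNReal InnerProductSpace BigOperators Topology

noncomputable section

namespace MFLDP

/-- Euclidean state space `ℝ^n`. -/
abbrev Vec (n : ℕ) := EuclideanSpace ℝ (Fin n)

/-- Matrix-vector multiplication on Euclidean spaces. -/
def matVec {a b : ℕ} (M : Matrix (Fin a) (Fin b) ℝ) (v : Vec b) : Vec a :=
  (EuclideanSpace.equiv (Fin a) ℝ).symm (M.mulVec (EuclideanSpace.equiv (Fin b) ℝ v))

/-- The (real) second moment `∫ ‖v‖² dμ` of a measure. -/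
def mom2 {E : Type*} [MeasurableSpace E] [NormedAddCommGroup E] (μ : Measure E) : ℝ :=
  ∫ v, ‖v‖ ^ 2 ∂μ

/-- Membership in `P₂(E)`: probability measures with finite second moment. -/
def memP2 {E : Type*} [MeasurableSpace E] [NormedAddCommGroup E] (μ : Measure E) : Prop :=
  IsProbabilityMeasure μ ∧ (∫⁻ v, (‖v‖₊ : ℝ≥0∞) ^ 2 ∂μ) < ⊤

/-- `π` is a coupling of the measures `μ` and `ν`. -/
def IsCoupling {E F : Type*} [MeasurableSpace E] [MeasurableSpace F]
    (π : Measure (E × F)) (μ : Measure E) (ν : Measure F) : Prop :=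
  π.map Prod.fst = μ ∧ π.map Prod.snd = ν

/-- The second order Wasserstein distance, defined through couplings. -/
def W2 {E : Type*} [MeasurableSpace E] [PseudoMetricSpace E] (μ ν : Measure E) : ℝ :=
  Real.sqrt (sInf { r : ℝ | ∃ π : Measure (E × E),
    IsCoupling π μ ν ∧ r = ∫ p, dist p.1 p.2 ^ 2 ∂π })

/-- Empirical measure `L^N(z) = N⁻¹ ∑ δ_{z_i}` of a tuple `z`. -/
def emp {E : Type*} [MeasurableSpace E] {N : ℕ} (z : Fin N → E) : Measure E :=
  ((N : ℝ≥0∞)⁻¹) • ∑ i, Measure.dirac (z i)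

lemma emp_isProbability {E : Type*} [MeasurableSpace E] {N : ℕ} (z : Fin (N + 1) → E) :
    IsProbabilityMeasure (emp z) := by
  constructor
  simp only [emp, Measure.smul_apply, Measure.coe_finset_sum, Finset.sum_apply,
    measure_univ, smul_eq_mul]
  rw [Finset.sum_const, Finset.card_univ, Fintype.card_fin, nsmul_eq_mul, mul_one]
  exact ENNReal.inv_mul_cancel (by exact_mod_cast Nat.succ_ne_zero N) (by simp)

/-- Empirical probability measure; for `N = 0` it is a Dirac mass at a default point. -/
def empProb {E : Type*} [MeasurableSpace E] (e₀ : E) :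
    ∀ {N : ℕ}, (Fin N → E) → ProbabilityMeasure E
  | 0, _ => ⟨Measure.dirac e₀, by infer_instance⟩
  | (_ + 1), z => ⟨emp z, emp_isProbability z⟩

/-- A `d`-dimensional Brownian motion (with respect to a given measure `P`). -/
structure IsBrownianMotion {Ω : Type*} [MeasurableSpace Ω] (P : Measure Ω) {d : ℕ}
    (W : ℝ → Ω → Vec d) : Prop where
  init : ∀ᵐ ω ∂P, W 0 ω = 0
  cont : ∀ ω, Continuous fun t => W t ω
  meas : ∀ t, Measurable (W t)
  incr_law : ∀ s t : ℝ, 0 ≤ s → s ≤ t →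
    P.map (fun ω => W t ω - W s ω)
      = (Measure.pi fun _ : Fin d => gaussianReal 0 (Real.toNNReal (t - s))).map
          (MeasurableEquiv.toLp 2 (Fin d → ℝ))
  indep_incr : ∀ (n : ℕ) (τ : Fin (n + 1) → ℝ), Monotone τ → (∀ i, 0 ≤ τ i) →
    iIndepFun (β := fun _ : Fin n => Vec d)
      (fun i ω => W (τ i.succ) ω - W (τ i.castSucc) ω) P

section LDP

variable {E : Type*} [MeasurableSpace E] [TopologicalSpace E] [OpensMeasurableSpace E]

/-- A good rate function: lower semicontinuous with (weakly) compact sublevel sets. -/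
def GoodRateFn (I : ProbabilityMeasure E → ℝ≥0∞) : Prop :=
  LowerSemicontinuous I ∧ ∀ a : ℝ≥0, IsCompact { μ : ProbabilityMeasure E | I μ ≤ a }

/-- The Laplace principle formulation of the large deviation principle for a sequence of random
probability measures `μN`, with rate function `I`. -/
def SatisfiesLDP {Ω : Type*} [MeasurableSpace Ω] (P : Measure Ω)
    (μN : (N : ℕ) → Ω → ProbabilityMeasure E) (I : ProbabilityMeasure E → ℝ≥0∞) : Prop :=
  GoodRateFn I ∧
    ∀ F : BoundedContinuousFunction (ProbabilityMeasure E) ℝ,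
      Tendsto
        (fun N : ℕ =>
          ((- (1 / (N : ℝ)) * Real.log (∫ ω, Real.exp (-(N : ℝ) * F (μN N ω)) ∂P) : ℝ) : EReal))
        atTop
        (𝓝 (⨅ μ : ProbabilityMeasure E, ((F μ : EReal) - ((I μ : ℝ≥0∞) : EReal))))

end LDP

section Path

variable {T : ℝ} {n : ℕ}

instance pathMeasurableSpace : MeasurableSpace C(Set.Icc (0:ℝ) T, Vec n) := borel _

instance pathBorelSpace : BorelSpace C(Set.Icc (0:ℝ) T, Vec n) := ⟨rfl⟩

/-- The path of a (surely) continuous process. -/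
def pathOf {Ω : Type*} (X : ℝ → Ω → Vec n) (h : ∀ ω, Continuous fun t => X t ω) (ω : Ω) :
    C(Set.Icc (0:ℝ) T, Vec n) :=
  ⟨fun s => X s ω, (h ω).comp continuous_subtype_val⟩

/-- Time-`t` marginal of a path-space measure. -/
def marginal (θ : Measure C(Set.Icc (0:ℝ) T, Vec n)) (t : Set.Icc (0:ℝ) T) : Measure (Vec n) :=
  θ.map fun γ => γ t

end Path

/-- The rate function `I(θ)` of the controlled McKean–Vlasov system with drift `D`:
`I(θ) = inf { E[½∫₀ᵀ |u_t|²dt] : u ∈ 𝒰, law(X^u) = θ }` where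
`dX^u = (D(t,X^u,law(X^u)) + σ u_t) dt + σ dW_t`, `X^u_0 = x₀`  (with `inf ∅ = ∞`). -/
def rateI (ℓ d : ℕ) (T : ℝ) (x₀ : Vec ℓ) (σ : Matrix (Fin ℓ) (Fin d) ℝ)
    (D : ℝ → Vec ℓ → Measure (Vec ℓ) → Vec ℓ)
    (θ : ProbabilityMeasure C(Set.Icc (0:ℝ) T, Vec ℓ)) : ℝ≥0∞ :=
  sInf { r : ℝ≥0∞ | ∃ (Ω' : Type) (m' : MeasurableSpace Ω') (P' : Measure Ω')
    (_hP' : IsProbabilityMeasure P') (ℱ' : Filtration ℝ m') (W' : ℝ → Ω' → Vec d)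
    (u : ℝ → Ω' → Vec d) (X : ℝ → Ω' → Vec ℓ) (hX : ∀ ω, Continuous fun t => X t ω),
    IsBrownianMotion P' W' ∧ Adapted ℱ' W' ∧ ProgMeasurable ℱ' u ∧
    (∫⁻ ω, ENNReal.ofReal (∫ t in (0:ℝ)..T, ‖u t ω‖ ^ 2) ∂P') < ⊤ ∧
    (∀ᵐ ω ∂P', ∀ t ∈ Set.Icc (0:ℝ) T,
      X t ω = x₀ + (∫ s in (0:ℝ)..t, (D s (X s ω) (P'.map (X s)) + matVec σ (u s ω)))
        + matVec σ (W' t ω)) ∧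
    P'.map (pathOf X hX) = (θ : Measure C(Set.Icc (0:ℝ) T, Vec ℓ)) ∧
    r = ∫⁻ ω, ENNReal.ofReal (∫ t in (0:ℝ)..T, ‖u t ω‖ ^ 2 / 2) ∂P' }

end MFLDP

namespace MFLDP

/-- Empirical measure of the paths of an `N`-tuple of (surely continuous) processes,
as a random probability measure on path space. -/
def empPaths {n : ℕ} {Ω : Type*} (T : ℝ) {N : ℕ} (X : Fin N → ℝ → Ω → Vec n)
    (h : ∀ i ω, Continuous fun t => X i t ω) (ω : Ω) :
    ProbabilityMeasure C(Set.Icc (0:ℝ) T, Vec n) :=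
  empProb (ContinuousMap.const _ (0 : Vec n)) fun i => pathOf (X i) (h i) ω

end MFLDP

namespace MFLDP

variable {ℓ m : ℕ}

/-- `ξ = law(χ, V(t,χ,μ))` for `χ ~ μ`. -/
def xiOf (V : ℝ → Vec ℓ → Measure (Vec ℓ) → Vec ℓ) (t : ℝ) (μ : Measure (Vec ℓ)) :
    Measure (Vec ℓ × Vec ℓ) :=
  μ.map fun z => (z, V t z μ)

/-- `∑_{j,k} Q_{jk} ∂²_{x_j x_k} φ(x)`, the trace term `tr(∂ₓₓφ Q)` (coordinatewise). -/
def hessTrace {n ℓ' : ℕ} (Q : Matrix (Fin n) (Fin n) ℝ) (φ : Vec n → Vec ℓ') (x : Vec n) :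
    Vec ℓ' :=
  ∑ j, ∑ k, Q j k •
    fderiv ℝ (fun x' => fderiv ℝ φ x' (EuclideanSpace.single k 1)) x (EuclideanSpace.single j 1)

/-- `∑_{j,k} Q_{jk} ∂_{y_k} M(y)_{i j}`: the mixed trace `tr(∂_y ∂_μ V (y) Q)`. -/
def mixTrace {ℓ' : ℕ} (Q : Matrix (Fin ℓ') (Fin ℓ') ℝ)
    (M : Vec ℓ' → Matrix (Fin ℓ') (Fin ℓ') ℝ) (y : Vec ℓ') : Vec ℓ' :=
  (EuclideanSpace.equiv (Fin ℓ') ℝ).symm fun i =>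
    ∑ j, ∑ k, Q j k * fderiv ℝ (fun y' => M y' i j) y (EuclideanSpace.single k 1)

end MFLDP

namespace MFLDP

variable {Ω : Type*} [MeasurableSpace Ω]

/-- The `S^∞`-norm of a real-valued process: essential supremum over `ω` of
`sup_{t ∈ [0,T]} |·|`. -/
def SInfty (P : Measure Ω) (T : ℝ) (g : ℝ → Ω → ℝ) : ℝ≥0∞ :=
  essSup (fun ω => ⨆ t : Set.Icc (0:ℝ) T, ENNReal.ofReal |g (t : ℝ) ω|) P

end MFLDP
namespace MFLDP

/-! `Ψ(t,μ)` is the pushforward of `μ` by `f_μ := Λ(t,·,V(t,·,μ),μ)`, and the two Lipschitz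
hypotheses give `|f_ξ x - f_ξ' x'| ≤ L (|x - x'| + W₂(ξ,ξ'))` with `L = |L_Λ| (1 + |L_V|)`.
Pushing a coupling `π` of `ξ, ξ'` forward by `f_ξ × f_ξ'` gives a coupling of the images of cost
at most `2L² ∫ |x - y|² dπ + 2L² W₂(ξ,ξ')²`; the infimum over `π` yields
`W₂(Ψ(t,ξ), Ψ(t,ξ'))² ≤ 4L² W₂(ξ,ξ')²`. -/

section Coupling

variable {E F : Type*} [MeasurableSpace E] [MeasurableSpace F]

lemma isCoupling_prod (μ ν : Measure E) [IsProbabilityMeasure μ] [IsProbabilityMeasure ν] :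
    IsCoupling (μ.prod ν) μ ν := by
  constructor <;> simp

lemma IsCoupling.map {μ ν : Measure E} {π : Measure (E × E)} (hπ : IsCoupling π μ ν)
    {f g : E → F} (hf : Measurable f) (hg : Measurable g) :
    IsCoupling (π.map (Prod.map f g)) (μ.map f) (ν.map g) := by
  constructor
  · rw [Measure.map_map measurable_fst (hf.prodMap hg), ← hπ.1,
      Measure.map_map hf measurable_fst]
    rfl
  · rw [Measure.map_map measurable_snd (hf.prodMap hg), ← hπ.2,
      Measure.map_map hg measurable_snd]
    rfl

lemma IsCoupling.isProbabilityMeasure {μ ν : Measure E} [IsProbabilityMeasure μ]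
    {π : Measure (E × E)} (hπ : IsCoupling π μ ν) : IsProbabilityMeasure π := by
  constructor
  rw [← Set.preimage_univ (f := Prod.fst), ← Measure.map_apply measurable_fst .univ, hπ.1,
    measure_univ]

end Coupling

section Wasserstein

variable {E F : Type*} [PseudoMetricSpace E] [MeasurableSpace E]
  [PseudoMetricSpace F] [MeasurableSpace F] [OpensMeasurableSpace F] [SecondCountableTopology F]

def transportCosts (μ ν : Measure E) : Set ℝ :=
  { r : ℝ | ∃ π : Measure (E × E), IsCoupling π μ ν ∧ r = ∫ p, dist p.1 p.2 ^ 2 ∂π }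

lemma nonneg_of_mem_transportCosts {μ ν : Measure E} {r : ℝ} (hr : r ∈ transportCosts μ ν) :
    0 ≤ r := by
  obtain ⟨π, -, rfl⟩ := hr
  exact integral_nonneg fun p => by positivity

lemma W2_eq_sqrt_sInf_transportCosts (μ ν : Measure E) :
    W2 μ ν = √(sInf (transportCosts μ ν)) := rfl

lemma W2_nonneg (μ ν : Measure E) : 0 ≤ W2 μ ν := Real.sqrt_nonneg _

lemma W2_self_eq_zero [OpensMeasurableSpace E] [SecondCountableTopology E] (μ : Measure E) :
    W2 μ μ = 0 := by
  have hdiag : Measurable fun x : E => (x, x) := measurable_id.prodMk measurable_id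
  have hzero : (0 : ℝ) ∈ transportCosts μ μ := by
    refine ⟨μ.map fun x => (x, x), ⟨?_, ?_⟩, ?_⟩
    · rw [Measure.map_map measurable_fst hdiag]; exact Measure.map_id
    · rw [Measure.map_map measurable_snd hdiag]; exact Measure.map_id
    · rw [integral_map hdiag.aemeasurable (by fun_prop)]; simp
  have hbdd : BddBelow (transportCosts μ μ) := ⟨0, fun _ => nonneg_of_mem_transportCosts⟩
  rw [W2_eq_sqrt_sInf_transportCosts, le_antisymm (csInf_le hbdd hzero)
    (Real.sInf_nonneg fun _ => nonneg_of_mem_transportCosts), Real.sqrt_zero]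

lemma W2_sq (μ ν : Measure E) : W2 μ ν ^ 2 = sInf (transportCosts μ ν) :=
  Real.sq_sqrt (Real.sInf_nonneg fun _ => nonneg_of_mem_transportCosts)

lemma W2_map_sq_le {μ ν : Measure E} [IsProbabilityMeasure μ] [IsProbabilityMeasure ν]
    {f g : E → F} (hf : Measurable f) (hg : Measurable g) {a b : ℝ} (ha : 0 ≤ a)
    (hcost : ∀ π : Measure (E × E), IsCoupling π μ ν →
      ∫ p, dist (f p.1) (g p.2) ^ 2 ∂π ≤ a * ∫ p, dist p.1 p.2 ^ 2 ∂π + b) :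
    W2 (μ.map f) (ν.map g) ^ 2 ≤ a * W2 μ ν ^ 2 + b := by
  have hne : (transportCosts μ ν).Nonempty := ⟨_, μ.prod ν, isCoupling_prod μ ν, rfl⟩
  have hmono : Monotone fun r => a * r + b := fun _ _ hrs => by dsimp only; gcongr
  rw [W2_sq, W2_sq, hmono.map_csInf_of_continuousAt (by fun_prop) hne
    ⟨0, fun _ => nonneg_of_mem_transportCosts⟩]
  refine le_csInf (hne.image _) (Set.forall_mem_image.2 ?_)
  rintro r ⟨π, hπ, rfl⟩
  have hpush : ∫ p, dist p.1 p.2 ^ 2 ∂(π.map (Prod.map f g))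
      ∈ transportCosts (μ.map f) (ν.map g) := ⟨_, hπ.map hf hg, rfl⟩
  calc sInf (transportCosts (μ.map f) (ν.map g))
      ≤ ∫ p, dist p.1 p.2 ^ 2 ∂(π.map (Prod.map f g)) :=
        csInf_le ⟨0, fun _ => nonneg_of_mem_transportCosts⟩ hpush
    _ = ∫ p, dist (f p.1) (g p.2) ^ 2 ∂π :=
        integral_map (hf.prodMap hg).aemeasurable (by fun_prop)
    _ ≤ a * ∫ p, dist p.1 p.2 ^ 2 ∂π + b := hcost π hπ

end Wasserstein

section SecondMoment

variable {E F : Type*} [NormedAddCommGroup E] [MeasurableSpace E] [OpensMeasurableSpace E]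
  [PseudoMetricSpace F] [MeasurableSpace F] [OpensMeasurableSpace F] [SecondCountableTopology F]

lemma integrable_norm_sq_of_memP2 {μ : Measure E} (hμ : memP2 μ) :
    Integrable (fun x => ‖x‖ ^ 2) μ := by
  refine ⟨(measurable_norm.pow_const 2).aestronglyMeasurable, ?_⟩
  simpa [HasFiniteIntegral, enorm_eq_nnnorm] using hμ.2

lemma integrable_dist_sq_of_isCoupling [SecondCountableTopology E] {μ ν : Measure E}
    (hμ : memP2 μ) (hν : memP2 ν) {π : Measure (E × E)} (hπ : IsCoupling π μ ν) :
    Integrable (fun p => dist p.1 p.2 ^ 2) π := by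
  have h₁ : Integrable (fun p : E × E => ‖p.1‖ ^ 2) π := by
    rw [← hπ.1] at hμ
    exact (integrable_norm_sq_of_memP2 hμ).comp_measurable measurable_fst
  have h₂ : Integrable (fun p : E × E => ‖p.2‖ ^ 2) π := by
    rw [← hπ.2] at hν
    exact (integrable_norm_sq_of_memP2 hν).comp_measurable measurable_snd
  refine ((h₁.const_mul 2).add (h₂.const_mul 2)).mono' (by fun_prop) (ae_of_all _ fun p => ?_)
  have htri : dist p.1 p.2 ≤ ‖p.1‖ + ‖p.2‖ := by
    rw [dist_eq_norm]; exact norm_sub_le _ _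
  rw [Real.norm_of_nonneg (by positivity), Pi.add_apply]
  nlinarith [dist_nonneg (x := p.1) (y := p.2), sq_nonneg (‖p.1‖ - ‖p.2‖)]

lemma W2_map_sq_le_of_dist_le [SecondCountableTopology E] {μ ν : Measure E} (hμ : memP2 μ)
    (hν : memP2 ν) {f g : E → F} (hf : Measurable f) (hg : Measurable g) {L c : ℝ}
    (hfg : ∀ x y, dist (f x) (g y) ≤ L * dist x y + c) :
    W2 (μ.map f) (ν.map g) ^ 2 ≤ 2 * L ^ 2 * W2 μ ν ^ 2 + 2 * c ^ 2 := by
  have := hμ.1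
  have := hν.1
  refine W2_map_sq_le hf hg (by positivity) fun π hπ => ?_
  have := hπ.isProbabilityMeasure
  have hint := integrable_dist_sq_of_isCoupling hμ hν hπ
  have hpoint (p : E × E) :
      dist (f p.1) (g p.2) ^ 2 ≤ 2 * L ^ 2 * dist p.1 p.2 ^ 2 + 2 * c ^ 2 :=
    calc dist (f p.1) (g p.2) ^ 2 ≤ (L * dist p.1 p.2 + c) ^ 2 :=
          pow_le_pow_left₀ dist_nonneg (hfg p.1 p.2) 2
      _ ≤ 2 * ((L * dist p.1 p.2) ^ 2 + c ^ 2) := add_sq_le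
      _ = 2 * L ^ 2 * dist p.1 p.2 ^ 2 + 2 * c ^ 2 := by ring
  calc ∫ p, dist (f p.1) (g p.2) ^ 2 ∂π
      ≤ ∫ p, (2 * L ^ 2 * dist p.1 p.2 ^ 2 + 2 * c ^ 2) ∂π :=
        integral_mono_of_nonneg (ae_of_all _ fun _ => by positivity)
          ((hint.const_mul _).add (integrable_const _)) (ae_of_all _ hpoint)
    _ = 2 * L ^ 2 * ∫ p, dist p.1 p.2 ^ 2 ∂π + 2 * c ^ 2 := by
        rw [integral_add (hint.const_mul _) (integrable_const _), integral_const_mul,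
          integral_const]
        simp

end SecondMoment

section Psi

variable {ℓ m : ℕ} (Λ : ℝ → Vec ℓ → Vec ℓ → Measure (Vec ℓ) → Vec m)
  (V : ℝ → Vec ℓ → Measure (Vec ℓ) → Vec ℓ) (t : ℝ) {LΛ LV : ℝ}
  (hΛ : ∀ (x x' y y' : Vec ℓ) (μ μ' : Measure (Vec ℓ)), memP2 μ → memP2 μ' →
    ‖Λ t x y μ - Λ t x' y' μ'‖ ≤ LΛ * (‖x - x'‖ + ‖y - y'‖ + W2 μ μ'))
  (hV : ∀ (x x' : Vec ℓ) (μ μ' : Measure (Vec ℓ)), memP2 μ → memP2 μ' →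
    ‖V t x μ - V t x' μ'‖ ≤ LV * (‖x - x'‖ + W2 μ μ'))

def psiMap (μ : Measure (Vec ℓ)) (x : Vec ℓ) : Vec m := Λ t x (V t x μ) μ

include hΛ hV

lemma dist_psiMap_le {μ μ' : Measure (Vec ℓ)} (hμ : memP2 μ) (hμ' : memP2 μ') (x x' : Vec ℓ) :
    dist (psiMap Λ V t μ x) (psiMap Λ V t μ' x')
      ≤ |LΛ| * (1 + |LV|) * dist x x' + |LΛ| * (1 + |LV|) * W2 μ μ' := by
  have hW := W2_nonneg μ μ'
  have hVdist : ‖V t x μ - V t x' μ'‖ ≤ |LV| * (‖x - x'‖ + W2 μ μ') :=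
    (hV x x' μ μ' hμ hμ').trans (by gcongr; exact le_abs_self LV)
  rw [dist_eq_norm, dist_eq_norm]
  calc ‖Λ t x (V t x μ) μ - Λ t x' (V t x' μ') μ'‖
      ≤ |LΛ| * (‖x - x'‖ + ‖V t x μ - V t x' μ'‖ + W2 μ μ') :=
        (hΛ _ _ _ _ μ μ' hμ hμ').trans (by gcongr; exact le_abs_self LΛ)
    _ ≤ |LΛ| * (‖x - x'‖ + |LV| * (‖x - x'‖ + W2 μ μ') + W2 μ μ') := by gcongr
    _ = |LΛ| * (1 + |LV|) * ‖x - x'‖ + |LΛ| * (1 + |LV|) * W2 μ μ' := by ring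

lemma lipschitzWith_psiMap {μ : Measure (Vec ℓ)} (hμ : memP2 μ) :
    LipschitzWith (|LΛ| * (1 + |LV|)).toNNReal (psiMap Λ V t μ) := by
  refine LipschitzWith.of_dist_le_mul fun x x' => ?_
  have h := dist_psiMap_le Λ V t hΛ hV hμ hμ x x'
  rwa [W2_self_eq_zero, mul_zero, add_zero,
    ← Real.coe_toNNReal (|LΛ| * (1 + |LV|)) (by positivity)] at h

end Psi

theorem Psi_W2_lipschitz_general {ℓ m : ℕ} (t : ℝ)
    (Λ : ℝ → Vec ℓ → Vec ℓ → MeasureTheory.Measure (Vec ℓ) → Vec m)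
    (V : ℝ → Vec ℓ → MeasureTheory.Measure (Vec ℓ) → Vec ℓ)
    (LΛ LV : ℝ)
    (hΛ : ∀ (x x' y y' : Vec ℓ) (μ μ' : MeasureTheory.Measure (Vec ℓ)),
      memP2 μ → memP2 μ' →
      ‖Λ t x y μ - Λ t x' y' μ'‖ ≤ LΛ * (‖x - x'‖ + ‖y - y'‖ + W2 μ μ'))
    (hV : ∀ (x x' : Vec ℓ) (μ μ' : MeasureTheory.Measure (Vec ℓ)),
      memP2 μ → memP2 μ' →
      ‖V t x μ - V t x' μ'‖ ≤ LV * (‖x - x'‖ + W2 μ μ')) :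
    ∃ C > (0:ℝ), ∀ ξ ξ' : MeasureTheory.Measure (Vec ℓ), memP2 ξ → memP2 ξ' →
      W2 (ξ.map fun x => Λ t x (V t x ξ) ξ) (ξ'.map fun x => Λ t x (V t x ξ') ξ')
        ≤ C * W2 ξ ξ' := by
  set L := |LΛ| * (1 + |LV|)
  refine ⟨2 * L + 1, by positivity, fun ξ ξ' hξ hξ' => ?_⟩
  have hW := W2_nonneg ξ ξ'
  have hsq := W2_map_sq_le_of_dist_le hξ hξ'
    (lipschitzWith_psiMap Λ V t hΛ hV hξ).continuous.measurable
    (lipschitzWith_psiMap Λ V t hΛ hV hξ').continuous.measurable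
    (dist_psiMap_le Λ V t hΛ hV hξ hξ')
  have hpsi : W2 (ξ.map (psiMap Λ V t ξ)) (ξ'.map (psiMap Λ V t ξ')) ≤ 2 * L * W2 ξ ξ' := by
    refine (pow_le_pow_iff_left₀ (W2_nonneg _ _) (by positivity) two_ne_zero).1 ?_
    linear_combination hsq
  exact hpsi.trans (by nlinarith)

/-- estimate (3.4) of the paper: if `Λ(t,·,·,·)` and `V(t,·,·)` are Lipschitz
continuous (Euclidean distance in the vector arguments, `W₂` in the measure argument), then
`μ ↦ Ψ(t,μ) = μ ∘ Λ(t,·,V(t,·,μ),μ)⁻¹` is Lipschitz with respect to `W₂`: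
`W₂(Ψ(t,ξ), Ψ(t,ξ')) ≤ C W₂(ξ, ξ')` on `P₂(ℝ^ℓ)`. -/
theorem Psi_W2_lipschitz {ℓ m : ℕ} (T t : ℝ) (ht : t ∈ Set.Icc (0:ℝ) T)
    (Λ : ℝ → Vec ℓ → Vec ℓ → MeasureTheory.Measure (Vec ℓ) → Vec m)
    (V : ℝ → Vec ℓ → MeasureTheory.Measure (Vec ℓ) → Vec ℓ)
    (LΛ LV : ℝ)
    (hΛ : ∀ (x x' y y' : Vec ℓ) (μ μ' : MeasureTheory.Measure (Vec ℓ)),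
      memP2 μ → memP2 μ' →
      ‖Λ t x y μ - Λ t x' y' μ'‖ ≤ LΛ * (‖x - x'‖ + ‖y - y'‖ + W2 μ μ'))
    (hV : ∀ (x x' : Vec ℓ) (μ μ' : MeasureTheory.Measure (Vec ℓ)),
      memP2 μ → memP2 μ' →
      ‖V t x μ - V t x' μ'‖ ≤ LV * (‖x - x'‖ + W2 μ μ')) :
    ∃ C > (0:ℝ), ∀ ξ ξ' : MeasureTheory.Measure (Vec ℓ), memP2 ξ → memP2 ξ' →
      W2 (ξ.map fun x => Λ t x (V t x ξ) ξ) (ξ'.map fun x => Λ t x (V t x ξ') ξ')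
        ≤ C * W2 ξ ξ' :=
  Psi_W2_lipschitz_general t Λ V LΛ LV hΛ hV

end MFLDP
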